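/- With Z = (Σ ℓ_∞^{k_i}) normed by |||y|||' = ‖Σ_j ‖Z_j y‖ w_j‖ where (w_j) is 1-unconditional with the shift property with constant C, let (y_i) be a normalised block sequence of (f_j) such that for each j at most one i has Z_j y_i ≠ 0. Then (y_i) is equivalent to (f_{r_i}) with r_i = min supp y_i. Concretely, setting z_i = Σ_{j=n_i}^{m_i} ‖Z_j y_i‖ w_j (a normalised block sequence of (w_j)), one has |||Σ λ_i y_i|||' = ‖Σ |λ_i| z_i‖ and (z_i) ~ (w_{n_i}) ~ (f_{r_i}). -/

import Mathlib

/-!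
The norm of `Z` sees a vector only through the sups of its coordinates over the blocks. If the
`y i` occupy pairwise disjoint blocks, the block sups of `∑ λ i • y i` are `|λ i|` times those of
`y i`, whence `‖∑ λ i • y i‖ = ‖∑ |λ i| • z i‖`; the same argument for the unit vectors
`f (r i)`, which sit in block `n i`, gives `‖∑ λ i • f (r i)‖ = ‖∑ |λ i| • w (n i)‖`. The shift
property makes `(z i)` and `(w (n i))` `C`-equivalent, and the two identities carry this over to
`(y i)` and `(f (r i))`.
-/

open Filter Topology

noncomputable section

structure SchauderBasis' (X : Type*) [NormedAddCommGroup X] [NormedSpace ℝ X] where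
  e : ℕ → X
  coord : ℕ → X →L[ℝ] ℝ
  biorth : ∀ n m, coord n (e m) = if n = m then 1 else 0
  expansion : ∀ x : X,
    Filter.Tendsto (fun N => ∑ n ∈ Finset.range N, coord n x • e n) Filter.atTop (nhds x)
  normalised : ∀ n, ‖e n‖ = 1

section Defs

variable {X Y : Type*} [NormedAddCommGroup X] [NormedSpace ℝ X]
  [NormedAddCommGroup Y] [NormedSpace ℝ Y]

/-- Convergence of the series `∑ x n` (of partial sums). -/
def Converges (x : ℕ → X) : Prop :=
  ∃ s, Filter.Tendsto (fun N => ∑ n ∈ Finset.range N, x n) Filter.atTop (nhds s)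

/-- Two sequences are equivalent if the same scalar series converge. -/
def SeqEquiv (x : ℕ → X) (y : ℕ → Y) : Prop :=
  ∀ a : ℕ → ℝ, Converges (fun n => a n • x n) ↔ Converges (fun n => a n • y n)

/-- `C`-equivalence of two sequences. -/
def CEquiv (C : ℝ) (x : ℕ → X) (y : ℕ → Y) : Prop :=
  ∀ (a : ℕ → ℝ) (N : ℕ),
    C⁻¹ * ‖∑ n ∈ Finset.range N, a n • y n‖ ≤ ‖∑ n ∈ Finset.range N, a n • x n‖ ∧
    ‖∑ n ∈ Finset.range N, a n • x n‖ ≤ C * ‖∑ n ∈ Finset.range N, a n • y n‖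

/-- A basic sequence: uniformly bounded partial-sum projections. -/
def IsBasicSeq (x : ℕ → X) : Prop :=
  ∃ K, 1 ≤ K ∧ ∀ (a : ℕ → ℝ) (m n : ℕ), m ≤ n →
    ‖∑ i ∈ Finset.range m, a i • x i‖ ≤ K * ‖∑ i ∈ Finset.range n, a i • x i‖

/-- A sequence of signs. -/
def IsSigns (θ : ℕ → ℝ) : Prop := ∀ n, θ n = 1 ∨ θ n = -1

end Defs

namespace SchauderBasis'

variable {X : Type*} [NormedAddCommGroup X] [NormedSpace ℝ X] (b : SchauderBasis' X)

/-- Support of a vector with respect to the basis. -/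
def supp (x : X) : Set ℕ := {n | b.coord n x ≠ 0}

/-- A normalised block sequence of the basis. -/
def IsBlockSeq (x : ℕ → X) : Prop :=
  (∀ n, ‖x n‖ = 1) ∧ (∀ n, (b.supp (x n)).Finite) ∧
  ∀ n, ∀ i ∈ b.supp (x n), ∀ j ∈ b.supp (x (n+1)), i < j

/-- Unconditionality of the basis. -/
def Unconditional : Prop :=
  ∀ θ : ℕ → ℝ, IsSigns θ → SeqEquiv (fun n => θ n • b.e n) b.e

/-- 1-unconditionality (finite-sum form). -/
def OneUnconditional : Prop :=
  ∀ (θ a : ℕ → ℝ), IsSigns θ → ∀ N,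
    ‖∑ n ∈ Finset.range N, (θ n * a n) • b.e n‖ ≤ ‖∑ n ∈ Finset.range N, a n • b.e n‖

/-- The shift property: every normalised block sequence is equivalent to its shift. -/
def ShiftProperty : Prop :=
  ∀ x : ℕ → X, b.IsBlockSeq x → SeqEquiv x (fun n => x (n+1))

/-- The basis is shrinking. -/
def Shrinking : Prop :=
  ∀ f : X →L[ℝ] ℝ, Filter.Tendsto
    (fun n => sSup ((fun y => |f y|) ''
      {y | y ∈ Submodule.span ℝ (Set.range fun i => b.e (n + i)) ∧ ‖y‖ ≤ 1}))
    Filter.atTop (nhds 0)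

/-- The basis is boundedly complete. -/
def BoundedlyComplete : Prop :=
  ∀ a : ℕ → ℝ, (∃ M, ∀ N, ‖∑ i ∈ Finset.range N, a i • b.e i‖ ≤ M) →
    Converges (fun i => a i • b.e i)

end SchauderBasis'

/-- `offset k n` is the start index of the `n`-th block. -/
def offset (k : ℕ → ℕ) (n : ℕ) : ℕ := ∑ i ∈ Finset.range n, k i

/-- The sup of `|c|` over the `i`-th block of indices. -/
def blockSup (k : ℕ → ℕ) (hk : ∀ i, 1 ≤ k i) (c : ℕ → ℝ) (i : ℕ) : ℝ :=
  (Finset.range (k i)).sup' (Finset.nonempty_range_iff.mpr (by have := hk i; omega))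
    fun t => |c (offset k i + t)|

section Stmt16

variable {X : Type*} [NormedAddCommGroup X] [NormedSpace ℝ X]

/-- The vector with (finitely supported) coefficients `c` with respect to `v`. -/
def vecOf (v : ℕ → X) (c : ℕ →₀ ℝ) : X := ∑ j ∈ c.support, c j • v j

/-- Shift property with constant `C`: any two jointly successive normalised block
sequences of `v` are `C`-equivalent. -/
def ShiftPropertyWithConst (C : ℝ) (v : ℕ → X) : Prop :=
  ∀ cz cw : ℕ → (ℕ →₀ ℝ),
    (∀ i, ‖vecOf v (cz i)‖ = 1) → (∀ i, ‖vecOf v (cw i)‖ = 1) →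
    (∀ i, ∀ a ∈ (cz i).support ∪ (cw i).support,
          ∀ b ∈ (cz (i+1)).support ∪ (cw (i+1)).support, a < b) →
    CEquiv C (fun i => vecOf v (cz i)) (fun i => vecOf v (cw i))

/-- The sup of the absolute values of the coordinates of `z` in the `j`-th block. -/
def coordBlockSup {Z : Type*} [NormedAddCommGroup Z] [NormedSpace ℝ Z]
    (bZ : SchauderBasis' Z) (k : ℕ → ℕ) (hk : ∀ i, 1 ≤ k i) (j : ℕ) (z : Z) : ℝ :=
  (Finset.range (k j)).sup' (Finset.nonempty_range_iff.mpr (by have := hk j; omega))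
    fun t => |bZ.coord (offset k j + t) z|

section Equivalence

variable {X Y : Type*} [NormedAddCommGroup X] [NormedSpace ℝ X]
  [NormedAddCommGroup Y] [NormedSpace ℝ Y]

theorem converges_of_norm_sum_le [CompleteSpace X] {x : ℕ → X} {y : ℕ → Y} {C : ℝ}
    (hC : 0 < C)
    (h : ∀ (a : ℕ → ℝ) (N : ℕ),
      ‖∑ i ∈ Finset.range N, a i • x i‖ ≤ C * ‖∑ i ∈ Finset.range N, a i • y i‖)
    {a : ℕ → ℝ} (hy : Converges fun i => a i • y i) : Converges fun i => a i • x i := by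
  obtain ⟨s, hs⟩ := hy
  set Sx := fun N => ∑ i ∈ Finset.range N, a i • x i
  set Sy := fun N => ∑ i ∈ Finset.range N, a i • y i
  -- apply `h` to the coefficients `a` cut off below `N`
  have htail : ∀ N n, N ≤ n → dist (Sx n) (Sx N) ≤ C * dist (Sy n) (Sy N) := fun N n hNn => by
    simpa only [Sx, Sy, dist_eq_norm, Finset.sum_range_sub_sum_range hNn, Finset.sum_filter,
      ite_smul, zero_smul] using h (fun i => if N ≤ i then a i else 0) n
  have hSx : CauchySeq Sx := by
    rw [Metric.cauchySeq_iff']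
    intro ε hε
    obtain ⟨N, hN⟩ := Metric.cauchySeq_iff'.mp hs.cauchySeq (ε / C) (by positivity)
    refine ⟨N, fun n hn => ?_⟩
    calc dist (Sx n) (Sx N) ≤ C * dist (Sy n) (Sy N) := htail N n hn
      _ < C * (ε / C) := mul_lt_mul_of_pos_left (hN n hn) hC
      _ = ε := mul_div_cancel₀ ε hC.ne'
  exact cauchySeq_tendsto_of_complete hSx

theorem CEquiv.seqEquiv [CompleteSpace X] [CompleteSpace Y] {C : ℝ} (hC : 0 < C)
    {x : ℕ → X} {y : ℕ → Y} (h : CEquiv C x y) : SeqEquiv x y := fun _ =>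
  ⟨converges_of_norm_sum_le hC fun a N => (inv_mul_le_iff₀ hC).mp (h a N).1,
    converges_of_norm_sum_le hC fun a N => (h a N).2⟩

variable {X' Y' : Type*} [NormedAddCommGroup X'] [NormedSpace ℝ X']
  [NormedAddCommGroup Y'] [NormedSpace ℝ Y']

theorem CEquiv.of_norm_sum_eq {C : ℝ} {x : ℕ → X} {y : ℕ → Y} {x' : ℕ → X'} {y' : ℕ → Y'}
    (φ : (ℕ → ℝ) → ℕ → ℝ)
    (hx : ∀ (a : ℕ → ℝ) (N : ℕ),
      ‖∑ i ∈ Finset.range N, a i • x i‖ = ‖∑ i ∈ Finset.range N, φ a i • x' i‖)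
    (hy : ∀ (a : ℕ → ℝ) (N : ℕ),
      ‖∑ i ∈ Finset.range N, a i • y i‖ = ‖∑ i ∈ Finset.range N, φ a i • y' i‖)
    (h : CEquiv C x' y') : CEquiv C x y := fun a N => by
  rw [hx, hy]
  exact h (φ a) N

end Equivalence

section ShiftProperty

variable {X : Type*} [NormedAddCommGroup X] [NormedSpace ℝ X]

theorem vecOf_indicator (v : ℕ → X) (s : Finset ℕ) (f : ℕ → ℝ) :
    vecOf v (Finsupp.indicator s fun j _ => f j) = ∑ j ∈ s, f j • v j := by
  rw [vecOf, Finset.sum_subset (Finsupp.support_indicator_subset _ _)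
    fun j _ hj => by rw [Finsupp.notMem_support_iff.mp hj, zero_smul]]
  exact Finset.sum_congr rfl fun j hj => by rw [Finsupp.indicator_apply, dif_pos hj]

theorem ShiftPropertyWithConst.cEquiv_sum {C : ℝ} {v : ℕ → X}
    (h : ShiftPropertyWithConst C v) (s t : ℕ → Finset ℕ) (f g : ℕ → ℕ → ℝ)
    (hf : ∀ i, ‖∑ j ∈ s i, f i j • v j‖ = 1) (hg : ∀ i, ‖∑ j ∈ t i, g i j • v j‖ = 1)
    (hst : ∀ i, ∀ a ∈ s i ∪ t i, ∀ b ∈ s (i + 1) ∪ t (i + 1), a < b) :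
    CEquiv C (fun i => ∑ j ∈ s i, f i j • v j) (fun i => ∑ j ∈ t i, g i j • v j) := by
  set F := fun i => Finsupp.indicator (s i) fun j _ => f i j
  set G := fun i => Finsupp.indicator (t i) fun j _ => g i j
  have hsupp : ∀ i, (F i).support ∪ (G i).support ⊆ s i ∪ t i := fun i =>
    Finset.union_subset_union (Finsupp.support_indicator_subset _ _)
      (Finsupp.support_indicator_subset _ _)
  simpa only [F, G, vecOf_indicator] using
    h F G (fun i => by simpa only [F, vecOf_indicator] using hf i)
      (fun i => by simpa only [G, vecOf_indicator] using hg i)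
      fun i a ha b hb => hst i a (hsupp i ha) b (hsupp (i + 1) hb)

end ShiftProperty

section Blocks

variable (k : ℕ → ℕ)

theorem offset_succ (n : ℕ) : offset k (n + 1) = offset k n + k n :=
  Finset.sum_range_succ k n

theorem offset_mono : Monotone (offset k) := fun _ _ hab =>
  Finset.sum_le_sum_of_subset (Finset.range_subset_range.mpr hab)

variable {k}

theorem le_offset (hk : ∀ i, 1 ≤ k i) (n : ℕ) : n ≤ offset k n := by
  simpa [offset] using Finset.card_nsmul_le_sum (Finset.range n) k 1 fun i _ => hk i

theorem le_of_offset_le_offset_add {j j' t : ℕ} (ht : t < k j')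
    (h : offset k j ≤ offset k j' + t) : j ≤ j' := by
  by_contra! hlt
  have := offset_mono k hlt
  rw [offset_succ] at this
  omega

theorem eq_of_offset_add_eq {j j' t t' : ℕ} (ht : t < k j) (ht' : t' < k j')
    (h : offset k j + t = offset k j' + t') : j = j' :=
  le_antisymm (le_of_offset_le_offset_add ht' (by omega)) (le_of_offset_le_offset_add ht (by omega))

theorem exists_eq_offset_add (hk : ∀ i, 1 ≤ k i) (p : ℕ) :
    ∃ j, ∃ t < k j, p = offset k j + t := by
  have hex : ∃ j, p < offset k (j + 1) := ⟨p, by have := le_offset hk (p + 1); omega⟩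
  have hlt := Nat.find_spec hex
  have hle : offset k (Nat.find hex) ≤ p := by
    rcases h : Nat.find hex with _ | j
    · simp [offset]
    · have := Nat.find_min hex (by omega : j < Nat.find hex)
      omega
  rw [offset_succ] at hlt
  exact ⟨Nat.find hex, p - offset k (Nat.find hex), by omega, by omega⟩

def BlockNonzero (k : ℕ → ℕ) (c : ℕ → ℝ) (j : ℕ) : Prop :=
  ∃ t < k j, c (offset k j + t) ≠ 0

theorem not_blockNonzero_iff {c : ℕ → ℝ} {j : ℕ} :
    ¬BlockNonzero k c j ↔ ∀ t < k j, c (offset k j + t) = 0 := by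
  simp [BlockNonzero]

theorem lt_offset_succ_of_ne_zero (hk : ∀ i, 1 ≤ k i) {c : ℕ → ℝ} {m p : ℕ}
    (hm : ∀ j, BlockNonzero k c j → j ≤ m) (hp : c p ≠ 0) : p < offset k (m + 1) := by
  obtain ⟨j, t, ht, rfl⟩ := exists_eq_offset_add hk p
  have := offset_mono k (by have := hm j ⟨t, ht, hp⟩; omega : j + 1 ≤ m + 1)
  rw [offset_succ] at this
  omega

theorem exists_eq_offset_add_of_first_ne_zero (hk : ∀ i, 1 ≤ k i) {c : ℕ → ℝ} {r n : ℕ}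
    (hr : c r ≠ 0) (hr_min : ∀ q, c q ≠ 0 → r ≤ q)
    (hn : BlockNonzero k c n) (hn_min : ∀ j, BlockNonzero k c j → n ≤ j) :
    ∃ t < k n, r = offset k n + t := by
  obtain ⟨j, t, ht, rfl⟩ := exists_eq_offset_add hk r
  obtain ⟨t₀, ht₀, h₀⟩ := hn
  have hjn : j ≤ n := le_of_offset_le_offset_add ht₀ (by have := hr_min _ h₀; omega)
  obtain rfl := le_antisymm hjn (hn_min j ⟨t, ht, hr⟩)
  exact ⟨t, ht, rfl⟩

end Blocks

section BlockSup

variable {k : ℕ → ℕ} (hk : ∀ i, 1 ≤ k i)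

theorem blockSup_congr {c c' : ℕ → ℝ} {j : ℕ}
    (h : ∀ t < k j, c (offset k j + t) = c' (offset k j + t)) :
    blockSup k hk c j = blockSup k hk c' j :=
  Finset.sup'_congr _ rfl fun t ht => by rw [h t (Finset.mem_range.mp ht)]

theorem blockSup_eq_zero {c : ℕ → ℝ} {j : ℕ} (h : ¬BlockNonzero k c j) :
    blockSup k hk c j = 0 :=
  (blockSup_congr hk (c' := 0) fun t ht => not_blockNonzero_iff.mp h t ht).trans
    (by simp [blockSup])

theorem blockSup_const_mul (a : ℝ) (c : ℕ → ℝ) (j : ℕ) :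
    blockSup k hk (fun p => a * c p) j = |a| * blockSup k hk c j := by
  simp only [blockSup, abs_mul, Finset.mul₀_sup' (abs_nonneg a)]

theorem blockSup_ite_eq {j t : ℕ} (ht : t < k j) :
    blockSup k hk (fun q => if q = offset k j + t then 1 else 0) j = 1 := by
  simp only [blockSup, add_right_inj]
  exact le_antisymm (Finset.sup'_le _ _ fun t' _ => by split_ifs <;> simp)
    (Finset.le_sup'_of_le _ (Finset.mem_range.mpr ht) (by simp))

theorem blockSup_sum_mul_of_disjoint {ι : Type*} (c : ι → ℕ → ℝ) (lam : ι → ℝ)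
    (s : Finset ι) (j : ℕ)
    (hdisj : ∀ i ∈ s, ∀ i' ∈ s, BlockNonzero k (c i) j → BlockNonzero k (c i') j → i = i') :
    blockSup k hk (fun p => ∑ i ∈ s, lam i * c i p) j =
      ∑ i ∈ s, |lam i| * blockSup k hk (c i) j := by
  by_cases hex : ∃ i₀ ∈ s, BlockNonzero k (c i₀) j
  · obtain ⟨i₀, hi₀, hne⟩ := hex
    have hzero : ∀ i ∈ s, i ≠ i₀ → ¬BlockNonzero k (c i) j := fun i hi hii₀ h =>
      hii₀ (hdisj i hi i₀ hi₀ h hne)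
    rw [Finset.sum_eq_single_of_mem i₀ hi₀ fun i hi hii₀ => by
      rw [blockSup_eq_zero hk (hzero i hi hii₀), mul_zero], ← blockSup_const_mul]
    refine blockSup_congr hk fun t ht => Finset.sum_eq_single_of_mem i₀ hi₀ fun i hi hii₀ => ?_
    rw [not_blockNonzero_iff.mp (hzero i hi hii₀) t ht, mul_zero]
  · push Not at hex
    rw [blockSup_eq_zero hk, Finset.sum_eq_zero fun i hi => by
      rw [blockSup_eq_zero hk (hex i hi), mul_zero]]
    refine not_blockNonzero_iff.mpr fun t ht => Finset.sum_eq_zero fun i hi => ?_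
    rw [not_blockNonzero_iff.mp (hex i hi) t ht, mul_zero]

end BlockSup

namespace SchauderBasis'

variable {X : Type*} [NormedAddCommGroup X] [NormedSpace ℝ X] (b : SchauderBasis' X)

theorem sum_range_coord_smul_eq (x : X) (M : ℕ) (h : ∀ p, b.coord p x ≠ 0 → p < M) :
    ∑ p ∈ Finset.range M, b.coord p x • b.e p = x := by
  refine tendsto_nhds_unique (tendsto_const_nhds.congr' ?_) (b.expansion x)
  filter_upwards [eventually_ge_atTop M] with N hN
  refine Finset.sum_subset (Finset.range_subset_range.mpr hN) fun p _ hp => ?_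
  rw [show b.coord p x = 0 by by_contra hne; exact hp (Finset.mem_range.mpr (h p hne)), zero_smul]

variable {b}

theorem IsBlockSeq.lt_of_blockNonzero {k : ℕ → ℕ} {y : ℕ → X} (hy : b.IsBlockSeq y)
    (hdisj : ∀ j i i', BlockNonzero k (b.coord · (y i)) j →
      BlockNonzero k (b.coord · (y i')) j → i = i')
    {i j j' : ℕ} (hj : BlockNonzero k (b.coord · (y i)) j)
    (hj' : BlockNonzero k (b.coord · (y (i + 1))) j') : j < j' := by
  obtain ⟨t, ht, h⟩ := hj
  obtain ⟨t', ht', h'⟩ := hj'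
  have hlt := hy.2.2 i _ h _ h'
  rcases (le_of_offset_le_offset_add ht' (by omega) : j ≤ j').lt_or_eq with hjj' | rfl
  · exact hjj'
  · exact absurd (hdisj j i (i + 1) ⟨t, ht, h⟩ ⟨t', ht', h'⟩) (by omega)

end SchauderBasis'

section LinftySum

variable {W Z : Type*} [NormedAddCommGroup W] [NormedSpace ℝ W]
  [NormedAddCommGroup Z] [NormedSpace ℝ Z]

/-- `Z = (Σ_j ℓ_∞^{k j})_W`, with `bZ` running through the blocks one after the other. -/
def IsLinftySum (bZ : SchauderBasis' Z) (w : ℕ → W) (k : ℕ → ℕ) (hk : ∀ i, 1 ≤ k i) : Prop :=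
  ∀ (lam : ℕ → ℝ) (N : ℕ),
    ‖∑ j ∈ Finset.range (offset k N), lam j • bZ.e j‖ =
    ‖∑ i ∈ Finset.range N, blockSup k hk lam i • w i‖

variable {bZ : SchauderBasis' Z} {w : ℕ → W} {k : ℕ → ℕ} {hk : ∀ i, 1 ≤ k i}

theorem coordBlockSup_eq_blockSup (bZ : SchauderBasis' Z) (k : ℕ → ℕ) (hk : ∀ i, 1 ≤ k i)
    (j : ℕ) (x : Z) : coordBlockSup bZ k hk j x = blockSup k hk (bZ.coord · x) j :=
  rfl

theorem IsLinftySum.norm_eq (h : IsLinftySum bZ w k hk) (x : Z) (M : ℕ)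
    (hx : ∀ p, bZ.coord p x ≠ 0 → p < offset k M) :
    ‖x‖ = ‖∑ j ∈ Finset.range M, coordBlockSup bZ k hk j x • w j‖ := by
  conv_lhs => rw [← bZ.sum_range_coord_smul_eq x _ hx]
  exact h _ M

theorem IsLinftySum.norm_sum_smul {ι : Type*} (h : IsLinftySum bZ w k hk) {y : ι → Z}
    (hdisj : ∀ j i i', BlockNonzero k (bZ.coord · (y i)) j →
      BlockNonzero k (bZ.coord · (y i')) j → i = i')
    {n m : ι → ℕ} (hnm : ∀ i j, BlockNonzero k (bZ.coord · (y i)) j → n i ≤ j ∧ j ≤ m i)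
    (lam : ι → ℝ) (s : Finset ι) :
    ‖∑ i ∈ s, lam i • y i‖ =
      ‖∑ i ∈ s, |lam i| • ∑ j ∈ Finset.Icc (n i) (m i), coordBlockSup bZ k hk j (y i) • w j‖ := by
  set M := s.sup m + 1
  have hm : ∀ i ∈ s, m i < M := fun i hi => Nat.lt_succ_of_le (Finset.le_sup hi)
  have hcoord : ∀ p, bZ.coord p (∑ i ∈ s, lam i • y i) = ∑ i ∈ s, lam i * bZ.coord p (y i) :=
    fun p => by simp only [map_sum, map_smul, smul_eq_mul]
  have hsupp : ∀ p, bZ.coord p (∑ i ∈ s, lam i • y i) ≠ 0 → p < offset k M := fun p hp => by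
    obtain ⟨i, hi, hne⟩ := Finset.exists_ne_zero_of_sum_ne_zero (hcoord p ▸ hp)
    exact (lt_offset_succ_of_ne_zero hk (fun j hj => (hnm i j hj).2)
      (right_ne_zero_of_mul hne)).trans_le (offset_mono k (hm i hi))
  have hIcc : ∀ i ∈ s, ∑ j ∈ Finset.Icc (n i) (m i), coordBlockSup bZ k hk j (y i) • w j =
      ∑ j ∈ Finset.range M, coordBlockSup bZ k hk j (y i) • w j := fun i hi => by
    refine Finset.sum_subset (fun j hj => Finset.mem_range.mpr ?_) fun j _ hj => ?_
    · exact (Finset.mem_Icc.mp hj).2.trans_lt (hm i hi)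
    · rw [coordBlockSup_eq_blockSup, blockSup_eq_zero hk fun hne => hj (Finset.mem_Icc.mpr
        (hnm i j hne)), zero_smul]
  rw [h.norm_eq _ M hsupp, Finset.sum_congr rfl fun i hi => congrArg (|lam i| • ·) (hIcc i hi)]
  simp only [Finset.smul_sum, smul_smul]
  rw [Finset.sum_comm]
  refine congrArg norm (Finset.sum_congr rfl fun j _ => ?_)
  rw [← Finset.sum_smul, coordBlockSup_eq_blockSup, funext hcoord,
    blockSup_sum_mul_of_disjoint hk _ _ _ _ fun i _ i' _ => hdisj j i i']
  rfl

theorem IsLinftySum.norm_sum_smul_basis {ι : Type*} (h : IsLinftySum bZ w k hk) {n r : ι → ℕ}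
    (hn : Function.Injective n) (hr : ∀ i, ∃ t < k (n i), r i = offset k (n i) + t)
    (a : ι → ℝ) (s : Finset ι) :
    ‖∑ i ∈ s, a i • bZ.e (r i)‖ = ‖∑ i ∈ s, |a i| • w (n i)‖ := by
  have hblock : ∀ i j, BlockNonzero k (bZ.coord · (bZ.e (r i))) j → j = n i := by
    rintro i j ⟨t, ht, hne⟩
    obtain ⟨t', ht', hri⟩ := hr i
    have hpos : offset k j + t = r i := by
      by_contra hpos
      simp [bZ.biorth, hpos] at hne
    exact eq_of_offset_add_eq ht ht' (hpos.trans hri)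
  have hone : ∀ i, coordBlockSup bZ k hk (n i) (bZ.e (r i)) = 1 := fun i => by
    obtain ⟨t, ht, hri⟩ := hr i
    simp only [coordBlockSup_eq_blockSup, bZ.biorth, hri]
    exact blockSup_ite_eq hk ht
  rw [h.norm_sum_smul (n := n) (m := n)
    (fun j i i' hi hi' => hn ((hblock i j hi).symm.trans (hblock i' j hi')))
    (fun i j hj => ⟨(hblock i j hj).ge, (hblock i j hj).le⟩) a s]
  simp [hone]

end LinftySum

theorem disjoint_block_sequence_equivalent
    {W Z : Type*} [NormedAddCommGroup W] [NormedSpace ℝ W] [CompleteSpace W]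
    [NormedAddCommGroup Z] [NormedSpace ℝ Z] [CompleteSpace Z]
    (bW : SchauderBasis' W)
    (C : ℝ) (hC1 : 1 ≤ C) (hshift : ShiftPropertyWithConst C bW.e)
    (k : ℕ → ℕ) (hk : ∀ i, 1 ≤ k i)
    (bZ : SchauderBasis' Z)
    (hnormZ : ∀ (lam : ℕ → ℝ) (N : ℕ),
      ‖∑ j ∈ Finset.range (offset k N), lam j • bZ.e j‖ =
      ‖∑ i ∈ Finset.range N, blockSup k hk lam i • bW.e i‖)
    (y : ℕ → Z) (hy : bZ.IsBlockSeq y)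
    (hatmostone : ∀ j i i',
      (∃ t, t < k j ∧ bZ.coord (offset k j + t) (y i) ≠ 0) →
      (∃ t, t < k j ∧ bZ.coord (offset k j + t) (y i') ≠ 0) → i = i')
    (n m : ℕ → ℕ)
    (hnm : ∀ i, (∃ t, t < k (n i) ∧ bZ.coord (offset k (n i) + t) (y i) ≠ 0) ∧
      (∃ t, t < k (m i) ∧ bZ.coord (offset k (m i) + t) (y i) ≠ 0) ∧
      ∀ j, (∃ t, t < k j ∧ bZ.coord (offset k j + t) (y i) ≠ 0) → n i ≤ j ∧ j ≤ m i)
    (r : ℕ → ℕ) (hr : ∀ i, r i ∈ bZ.supp (y i) ∧ ∀ q ∈ bZ.supp (y i), r i ≤ q) :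
    (∀ i, ‖∑ j ∈ Finset.Icc (n i) (m i), coordBlockSup bZ k hk j (y i) • bW.e j‖ = 1) ∧
    (∀ (lam : ℕ → ℝ) (N : ℕ),
      ‖∑ i ∈ Finset.range N, lam i • y i‖ =
      ‖∑ i ∈ Finset.range N,
        |lam i| • (∑ j ∈ Finset.Icc (n i) (m i), coordBlockSup bZ k hk j (y i) • bW.e j)‖) ∧
    SeqEquiv (fun i => ∑ j ∈ Finset.Icc (n i) (m i), coordBlockSup bZ k hk j (y i) • bW.e j)
      (fun i => bW.e (n i)) ∧
    SeqEquiv y (fun i => bZ.e (r i)) := by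
  have hZ : IsLinftySum bZ bW.e k hk := hnormZ
  have hbounds : ∀ i j, BlockNonzero k (bZ.coord · (y i)) j → n i ≤ j ∧ j ≤ m i :=
    fun i => (hnm i).2.2
  have hyz := hZ.norm_sum_smul hatmostone hbounds
  have hz : ∀ i, ‖∑ j ∈ Finset.Icc (n i) (m i), coordBlockSup bZ k hk j (y i) • bW.e j‖ = 1 :=
    fun i => by simpa [hy.1 i] using (hyz 1 {i}).symm
  have hmn : ∀ i, m i < n (i + 1) := fun i =>
    hy.lt_of_blockNonzero hatmostone (hnm i).2.1 (hnm (i + 1)).1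
  have hn : StrictMono n := strictMono_nat_of_lt_succ fun i =>
    (hbounds i _ (hnm i).1).2.trans_lt (hmn i)
  have hr_block : ∀ i, ∃ t < k (n i), r i = offset k (n i) + t := fun i =>
    exists_eq_offset_add_of_first_ne_zero (c := (bZ.coord · (y i))) hk (hr i).1 (hr i).2
      (hnm i).1 fun j hj => (hbounds i j hj).1
  have hzw := hshift.cEquiv_sum (fun i => Finset.Icc (n i) (m i)) (fun i => {n i})
    (fun i j => coordBlockSup bZ k hk j (y i)) 1 hz (by simp [bW.normalised])
    fun i a ha b hb => by
      simp only [Finset.mem_union, Finset.mem_Icc, Finset.mem_singleton] at ha hb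
      have := hbounds i _ (hnm i).1
      have := hmn i
      omega
  simp only [Finset.sum_singleton, Pi.one_apply, one_smul] at hzw
  have hC : 0 < C := by linarith
  exact ⟨hz, fun lam N => hyz lam _, hzw.seqEquiv hC,
    (hzw.of_norm_sum_eq (fun a i => |a i|) (fun a N => hyz a _)
      fun a N => hZ.norm_sum_smul_basis hn.injective hr_block a _).seqEquiv hC⟩

end Stmt16
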